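/- For the generalized amplitude damping dynamics with γ = 1/10 and f = 4, let r₁ = (1,0,0), r₂ = (0,1,0), p = 1/4, q = 3/4, and define the generalized trace distance D(t) = max(‖p T(t)r₁ - q T(t)r₂ + (p-q)c(t)‖, |p-q|), i.e. D(t) = max(√((1/16)e^{-t/10} + (9/16)e^{-t/10} + (1/4)(2cos²(4t)-1)²(1-e^{-t/10})²), 1/2). Then D is not antitone on [0,∞): there exist 0 ≤ t₁ < t₂ with D(t₁) < D(t₂). -/

import Mathlib

noncomputable section

/-- The action of a qubit dynamical map, given by a real 3×3 matrix,
on Bloch vectors in ℝ³. -/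
def act (T : Matrix (Fin 3) (Fin 3) ℝ) (r : EuclideanSpace ℝ (Fin 3)) :
    EuclideanSpace ℝ (Fin 3) :=
  WithLp.toLp 2 (T.mulVec r)

/-- The matrix part T(t) = diag(√η, √η, η), η = e^{-γt}, of the generalized
amplitude damping dynamics. -/
def Tgad (γ t : ℝ) : Matrix (Fin 3) (Fin 3) ℝ :=
  Matrix.diagonal ![Real.sqrt (Real.exp (-γ * t)), Real.sqrt (Real.exp (-γ * t)),
    Real.exp (-γ * t)]

/-- The translation part c(t) = (0, 0, (2s-1)(1-η)), s = cos²(ft), η = e^{-γt}, of the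
generalized amplitude damping dynamics. -/
def cgad (γ f t : ℝ) : EuclideanSpace ℝ (Fin 3) :=
  WithLp.toLp 2 ![0, 0, (2 * Real.cos (f * t) ^ 2 - 1) * (1 - Real.exp (-γ * t))]

/-! With r₁ = e₁, r₂ = e₂ and η = e^{-t/10}, the squared norm of w(t) is
(5/8)η + (1/4)cos²(8t)(1-η)², and |p - q| = 1/2. At t₁ = 77π/16 the oscillating term vanishes
and η(t₁) ≤ 2/5, so D(t₁) = 1/2; at t₂ = 5π it equals 1, and then the radicand exceeds 1/4 by
η(1/8 + η/4) > 0, so D(t₂) > 1/2. -/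

open Real

theorem norm_sq_gad_bloch_difference (γ f p q t : ℝ) :
    ‖p • act (Tgad γ t) (WithLp.toLp 2 ![1, 0, 0]) - q • act (Tgad γ t) (WithLp.toLp 2 ![0, 1, 0])
        + (p - q) • cgad γ f t‖ ^ 2
      = (p ^ 2 + q ^ 2) * exp (-γ * t)
        + (p - q) ^ 2 * (2 * cos (f * t) ^ 2 - 1) ^ 2 * (1 - exp (-γ * t)) ^ 2 := by
  rw [EuclideanSpace.norm_sq_eq, Fin.sum_univ_three]
  simp only [act, Tgad, cgad, PiLp.add_apply, PiLp.sub_apply, PiLp.smul_apply,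
    Matrix.mulVec_diagonal, Matrix.cons_val_zero, Matrix.cons_val_one, Matrix.cons_val, smul_eq_mul,
    mul_one, mul_zero, sub_zero, add_zero, zero_sub, zero_add, sub_self, norm_neg, norm_mul,
    norm_eq_abs, mul_pow, sq_abs, sq_sqrt (exp_pos _).le]
  ring

theorem exp_neg_div_ten_le_two_fifths {t : ℝ} (ht : 15 ≤ t) : exp (-t / 10) ≤ 2 / 5 := by
  rw [neg_div, exp_neg, inv_le_comm₀ (exp_pos _) (by norm_num)]
  linarith [add_one_le_exp (t / 10)]

/-- For the generalized amplitude damping dynamics with γ = 1/10, f = 4, with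
r₁ = (1,0,0), r₂ = (0,1,0), p = 1/4, q = 3/4, the generalized trace distance
D(t) = max(‖p T(t)r₁ - q T(t)r₂ + (p-q)c(t)‖, |p-q|), which equals
max(√((1/16)e^{-t/10} + (9/16)e^{-t/10} + (1/4)(2cos²(4t)-1)²(1-e^{-t/10})²), 1/2),
is not antitone on [0,∞): it increases somewhere. -/
theorem gad_gblp_distance_not_antitone :
    let p : ℝ := 1 / 4
    let q : ℝ := 3 / 4
    let r₁ : EuclideanSpace ℝ (Fin 3) := WithLp.toLp 2 ![1, 0, 0]
    let r₂ : EuclideanSpace ℝ (Fin 3) := WithLp.toLp 2 ![0, 1, 0]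
    let D : ℝ → ℝ := fun t =>
      max ‖p • act (Tgad (1 / 10) t) r₁ - q • act (Tgad (1 / 10) t) r₂
            + (p - q) • cgad (1 / 10) 4 t‖ |p - q|
    (∀ t : ℝ, D t = max (Real.sqrt ((1 / 16) * Real.exp (-t / 10)
        + (9 / 16) * Real.exp (-t / 10)
        + (1 / 4) * (2 * Real.cos (4 * t) ^ 2 - 1) ^ 2
            * (1 - Real.exp (-t / 10)) ^ 2)) (1 / 2))
    ∧ ¬ AntitoneOn D (Set.Ici 0)
    ∧ ∃ t₁ t₂ : ℝ, 0 ≤ t₁ ∧ t₁ < t₂ ∧ D t₁ < D t₂ := by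
  intro p q r₁ r₂ D
  have hD : ∀ t : ℝ, D t = max (√((1 / 16) * exp (-t / 10) + (9 / 16) * exp (-t / 10)
      + (1 / 4) * (2 * cos (4 * t) ^ 2 - 1) ^ 2 * (1 - exp (-t / 10)) ^ 2)) (1 / 2) := by
    intro t
    show max ‖_‖ |p - q| = _
    rw [← sqrt_sq (norm_nonneg _), norm_sq_gad_bloch_difference,
      show -(1 / 10) * t = -t / 10 by ring]
    norm_num [p, q, abs_of_neg]
    ring_nf
  have hπ := pi_gt_d2
  have hcos₁ : 2 * cos (4 * (77 * π / 16)) ^ 2 - 1 = 0 := by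
    rw [← cos_two_mul, cos_eq_zero_iff]
    exact ⟨38, by ring⟩
  have hcos₂ : 2 * cos (4 * (5 * π)) ^ 2 - 1 = 1 := by
    rw [← cos_two_mul, show 2 * (4 * (5 * π)) = (20 : ℕ) * (2 * π) by push_cast; ring,
      cos_nat_mul_two_pi]
  have hincr : D (77 * π / 16) < D (5 * π) := by
    have hη₁ := exp_neg_div_ten_le_two_fifths (t := 77 * π / 16) (by linarith)
    have hη₂ := exp_pos (-(5 * π) / 10)
    rw [hD, hD, hcos₁, hcos₂, max_eq_right (sqrt_le_left (by norm_num) |>.mpr (by linarith))]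
    exact lt_max_of_lt_left <| (lt_sqrt (by norm_num)).mpr (by nlinarith)
  have h₁ : 77 * π / 16 ∈ Set.Ici (0 : ℝ) := Set.mem_Ici.mpr (by positivity)
  have h₂ : 5 * π ∈ Set.Ici (0 : ℝ) := Set.mem_Ici.mpr (by positivity)
  exact ⟨hD, fun hanti => (hanti h₁ h₂ (by linarith)).not_gt hincr,
    77 * π / 16, 5 * π, h₁, by linarith, hincr⟩
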